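/- arXiv:2307.11071 — 2 statements merged into one kernel-verified Lean document; each statement's English description precedes it below -/
import Mathlib

section
/- For distinct points x, y in the Riemann sphere ℙ¹(ℂ), let K_{x,y} ⊂ SL(2,ℂ) be the set of matrices B with B·x = i and B·y = -i (Möbius action), and let k(x,y) = inf_{B ∈ K_{x,y}} ‖B‖². Then 1 ≤ d(x,y)·k(x,y) ≤ 2, where d(x,y) is the absolute value of the sine of the angle between the corresponding directions in ℂ². -/
open Matrix Complex Filter

noncomputable section

/-- Operator norm of a 2×2 complex matrix acting on ℂ². -/
def opN (A : Matrix (Fin 2) (Fin 2) ℂ) : ℝ :=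
  ‖Matrix.toEuclideanCLM (𝕜 := ℂ) (n := Fin 2) A‖

/-- Determinant of the 2×2 matrix with columns u, v. -/
def crossDet (u v : Fin 2 → ℂ) : ℂ := u 0 * v 1 - u 1 * v 0

/-- Euclidean norm of a vector in ℂ². -/
def vnorm (u : Fin 2 → ℂ) : ℝ := Real.sqrt (‖u 0‖ ^ 2 + ‖u 1‖ ^ 2)

/-- Sine-of-angle distance between the directions of two nonzero vectors. -/
def dSin (u v : Fin 2 → ℂ) : ℝ := ‖crossDet u v‖ / (vnorm u * vnorm v)

/-- Two vectors span the same direction (are parallel). -/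
def SameDir (u v : Fin 2 → ℂ) : Prop := crossDet u v = 0

def vI : Fin 2 → ℂ := ![Complex.I, 1]
def vmI : Fin 2 → ℂ := ![-Complex.I, 1]

abbrev SL2C := Matrix.SpecialLinearGroup (Fin 2) ℂ

/-- The set K_{x,y} of B ∈ SL(2,ℂ) sending direction x to i and y to -i. -/
def Kset (x y : Fin 2 → ℂ) : Set SL2C :=
  {B | SameDir ((B : Matrix (Fin 2) (Fin 2) ℂ).mulVec x) vI ∧
       SameDir ((B : Matrix (Fin 2) (Fin 2) ℂ).mulVec y) vmI}

/-- k(x,y) = inf over K_{x,y} of ‖B‖². -/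
def kfun (x y : Fin 2 → ℂ) : ℝ :=
  sInf ((fun B : SL2C => opN (B : Matrix (Fin 2) (Fin 2) ℂ) ^ 2) '' Kset x y)

/-- B is minimizing: ‖B⁻¹·(i,1)‖ = ‖B⁻¹·(-i,1)‖. -/
def Minimizing (B : SL2C) : Prop :=
  vnorm ((((B⁻¹ : SL2C) : Matrix (Fin 2) (Fin 2) ℂ)).mulVec vI) =
  vnorm (((B⁻¹ : SL2C) : Matrix (Fin 2) (Fin 2) ℂ).mulVec vmI)

/-- Rotation matrix R_λ, for complex λ. -/
def Rmat (l : ℂ) : Matrix (Fin 2) (Fin 2) ℂ :=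
  !![Complex.cos (2 * Real.pi * l), -Complex.sin (2 * Real.pi * l);
     Complex.sin (2 * Real.pi * l), Complex.cos (2 * Real.pi * l)]

/-- Diagonal matrix D_μ = diag(μ, μ⁻¹). -/
def Dmat (m : ℂ) : Matrix (Fin 2) (Fin 2) ℂ := !![m, 0; 0, m⁻¹]

/-- Möbius action of a 2×2 complex matrix on ℂ. -/
def moebius (A : Matrix (Fin 2) (Fin 2) ℂ) (z : ℂ) : ℂ :=
  (A 0 0 * z + A 0 1) / (A 1 0 * z + A 1 1)

/-- Cocycle product B_n(x) = B(x+(n-1)α) ⋯ B(x). -/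
def coc (α : ℝ) (B : ℝ → Matrix (Fin 2) (Fin 2) ℂ) : ℕ → ℝ → Matrix (Fin 2) (Fin 2) ℂ
  | 0, _ => 1
  | n + 1, x => B (x + n * α) * coc α B n x

/-- Uniform hyperbolicity of the cocycle (α, B), witnessed by continuous
invariant unstable/stable direction fields U, S with exponential expansion/contraction. -/
def UnifHyp (α : ℝ) (B : ℝ → Matrix (Fin 2) (Fin 2) ℂ) (U S : ℝ → Fin 2 → ℂ) : Prop :=
  Continuous U ∧ Continuous S ∧ (∀ x, U x ≠ 0) ∧ (∀ x, S x ≠ 0) ∧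
  (∀ x, SameDir (U (x + 1)) (U x)) ∧ (∀ x, SameDir (S (x + 1)) (S x)) ∧
  (∀ x, SameDir ((B x).mulVec (U x)) (U (x + α))) ∧
  (∀ x, SameDir ((B x).mulVec (S x)) (S (x + α))) ∧
  ∃ C > 0, ∃ lam > 1, ∀ n : ℕ, ∀ x : ℝ,
    vnorm ((coc α B n x).mulVec (U x)) ≥ C⁻¹ * lam ^ n * vnorm (U x) ∧
    vnorm ((coc α B n x).mulVec (S x)) ≤ C * lam⁻¹ ^ n * vnorm (S x)

/-- The Lyapunov exponent of the cocycle (α, B) is L. -/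
def IsLE (α : ℝ) (B : ℝ → Matrix (Fin 2) (Fin 2) ℂ) (L : ℝ) : Prop :=
  Tendsto (fun n : ℕ => (n : ℝ)⁻¹ * ∫ x in (0:ℝ)..1, Real.log (opN (coc α B n x)))
    atTop (nhds L)

/-- Complexification of a real matrix. -/
def cplx (A : Matrix (Fin 2) (Fin 2) ℝ) : Matrix (Fin 2) (Fin 2) ℂ :=
  A.map (Complex.ofReal)

/-- The denominators q_n of the continued fraction approximants. -/
def qden (α : ℝ) (n : ℕ) : ℝ := (GenContFract.of α).dens n

/-- β(α) = limsup (ln q_{n+1})/q_n. -/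
def betaCF (α : ℝ) : ℝ :=
  Filter.limsup (fun n : ℕ => Real.log (qden α (n + 1)) / qden α n) atTop

end

/-!
For `B ∈ K_{x,y}` put `M = B⁻¹`, so that `M (i, 1) = p x` and `M (-i, 1) = q y` for some
scalars, and `det M = 1` forces `p q Δ = 2i` with `Δ = det [x | y]`. By the parallelogram law
`|M (i, 1)|² + |M (-i, 1)|² = 2 ‖M‖_F²`, and `‖M‖_F = ‖B‖_F` because `M` is the adjugate of
`B`; hence `2 ‖B‖_F² = (|p| |x|)² + (|q| |y|)² ≥ 2 |p| |q| |x| |y| = 4 |x| |y| / |Δ|`, with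
equality for a suitable choice of `p`, `q`. The bounds `‖B‖² ≤ ‖B‖_F² ≤ 2 ‖B‖²` then give
`|x| |y| / |Δ| ≤ k(x, y) ≤ 2 |x| |y| / |Δ|`, while `d(x, y) = |Δ| / (|x| |y|)`.
-/

lemma vnorm_sq (u : Fin 2 → ℂ) : vnorm u ^ 2 = ‖u 0‖ ^ 2 + ‖u 1‖ ^ 2 :=
  Real.sq_sqrt (by positivity)

lemma vnorm_nonneg (u : Fin 2 → ℂ) : 0 ≤ vnorm u := Real.sqrt_nonneg _

lemma vnorm_pos {u : Fin 2 → ℂ} (hu : u ≠ 0) : 0 < vnorm u := by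
  have h : u 0 ≠ 0 ∨ u 1 ≠ 0 := by
    contrapose! hu
    ext i; fin_cases i <;> simp [hu.1, hu.2]
  apply Real.sqrt_pos.mpr
  rcases h with h | h <;> positivity

lemma vnorm_smul (c : ℂ) (u : Fin 2 → ℂ) : vnorm (c • u) = ‖c‖ * vnorm u := by
  rw [vnorm, vnorm, ← Real.sqrt_sq (norm_nonneg c), ← Real.sqrt_mul (sq_nonneg _)]
  simp only [Pi.smul_apply, smul_eq_mul, norm_mul]
  ring_nf

lemma norm_toLp_eq_vnorm (u : Fin 2 → ℂ) : ‖WithLp.toLp 2 u‖ = vnorm u := by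
  simp [EuclideanSpace.norm_eq, vnorm, Fin.sum_univ_two]

lemma vnorm_mulVec_le_opN (A : Matrix (Fin 2) (Fin 2) ℂ) (u : Fin 2 → ℂ) :
    vnorm (A *ᵥ u) ≤ opN A * vnorm u := by
  have := (toEuclideanCLM (𝕜 := ℂ) (n := Fin 2) A).le_opNorm (WithLp.toLp 2 u)
  rwa [toEuclideanCLM_toLp, norm_toLp_eq_vnorm, norm_toLp_eq_vnorm] at this

noncomputable def frobSq (A : Matrix (Fin 2) (Fin 2) ℂ) : ℝ :=
  ‖A 0 0‖ ^ 2 + ‖A 0 1‖ ^ 2 + ‖A 1 0‖ ^ 2 + ‖A 1 1‖ ^ 2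

lemma frobSq_nonneg (A : Matrix (Fin 2) (Fin 2) ℂ) : 0 ≤ frobSq A := by
  unfold frobSq; positivity

lemma frobSq_le_two_mul_opN_sq (A : Matrix (Fin 2) (Fin 2) ℂ) :
    frobSq A ≤ 2 * opN A ^ 2 := by
  have col (u : Fin 2 → ℂ) (hu : vnorm u = 1) : vnorm (A *ᵥ u) ^ 2 ≤ opN A ^ 2 := by
    have := vnorm_mulVec_le_opN A u
    rw [hu, mul_one] at this
    exact pow_le_pow_left₀ (vnorm_nonneg _) this 2
  have h0 : ‖A 0 0‖ ^ 2 + ‖A 1 0‖ ^ 2 ≤ opN A ^ 2 := by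
    simpa [vnorm_sq] using col ![1, 0] (by simp [vnorm])
  have h1 : ‖A 0 1‖ ^ 2 + ‖A 1 1‖ ^ 2 ≤ opN A ^ 2 := by
    simpa [vnorm_sq] using col ![0, 1] (by simp [vnorm])
  unfold frobSq; linarith

lemma norm_mul_add_mul_sq_le (a b u v : ℂ) :
    ‖a * u + b * v‖ ^ 2 ≤ (‖a‖ ^ 2 + ‖b‖ ^ 2) * (‖u‖ ^ 2 + ‖v‖ ^ 2) := by
  have h : ‖a * u + b * v‖ ≤ ‖a‖ * ‖u‖ + ‖b‖ * ‖v‖ := by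
    simpa only [norm_mul] using norm_add_le (a * u) (b * v)
  calc ‖a * u + b * v‖ ^ 2 ≤ (‖a‖ * ‖u‖ + ‖b‖ * ‖v‖) ^ 2 := by gcongr
    _ ≤ _ := by nlinarith [sq_nonneg (‖a‖ * ‖v‖ - ‖b‖ * ‖u‖)]

lemma vnorm_mulVec_sq_le (A : Matrix (Fin 2) (Fin 2) ℂ) (u : Fin 2 → ℂ) :
    vnorm (A *ᵥ u) ^ 2 ≤ frobSq A * vnorm u ^ 2 := by
  simp only [vnorm_sq, mulVec_fin_two, Matrix.cons_val_zero, Matrix.cons_val_one]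
  have := norm_mul_add_mul_sq_le (A 0 0) (A 0 1) (u 0) (u 1)
  have := norm_mul_add_mul_sq_le (A 1 0) (A 1 1) (u 0) (u 1)
  unfold frobSq; nlinarith

lemma opN_sq_le_frobSq (A : Matrix (Fin 2) (Fin 2) ℂ) : opN A ^ 2 ≤ frobSq A := by
  have hle : opN A ≤ √(frobSq A) := by
    refine ContinuousLinearMap.opNorm_le_bound _ (Real.sqrt_nonneg _) fun v => ?_
    rw [← WithLp.toLp_ofLp (p := 2) v, toEuclideanCLM_toLp, norm_toLp_eq_vnorm,
      norm_toLp_eq_vnorm, ← Real.sqrt_sq (vnorm_nonneg _),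
      ← Real.sqrt_sq (vnorm_nonneg (WithLp.ofLp v)),
      ← Real.sqrt_mul (frobSq_nonneg A)]
    exact Real.sqrt_le_sqrt (vnorm_mulVec_sq_le A _)
  calc opN A ^ 2 ≤ √(frobSq A) ^ 2 := by gcongr; exact norm_nonneg _
    _ = frobSq A := Real.sq_sqrt (frobSq_nonneg A)

lemma crossDet_self (u : Fin 2 → ℂ) : crossDet u u = 0 := by
  simp only [crossDet]; ring

lemma crossDet_smul (a b : ℂ) (u v : Fin 2 → ℂ) :
    crossDet (a • u) (b • v) = a * b * crossDet u v := by
  simp only [crossDet, Pi.smul_apply, smul_eq_mul]; ring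

lemma crossDet_mulVec (A : Matrix (Fin 2) (Fin 2) ℂ) (u v : Fin 2 → ℂ) :
    crossDet (A *ᵥ u) (A *ᵥ v) = A.det * crossDet u v := by
  simp only [crossDet, mulVec_fin_two, det_fin_two, Matrix.cons_val_zero, Matrix.cons_val_one]
  ring

lemma crossDet_vI_vmI : crossDet vI vmI = 2 * I := by
  simp only [crossDet, vI, vmI, Matrix.cons_val_zero, Matrix.cons_val_one]; ring

lemma frobSq_adjugate (A : Matrix (Fin 2) (Fin 2) ℂ) : frobSq A.adjugate = frobSq A := by
  simp only [frobSq, adjugate_fin_two, of_apply, Matrix.cons_val', Matrix.cons_val_zero,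
    Matrix.cons_val_one, Matrix.empty_val', Matrix.cons_val_fin_one, norm_neg]
  ring

lemma frobSq_inv (M : SL2C) : frobSq (M⁻¹ : SL2C) = frobSq M := by
  rw [show ((M⁻¹ : SL2C) : Matrix (Fin 2) (Fin 2) ℂ) = adjugate M from
    Matrix.SpecialLinearGroup.coe_inv M, frobSq_adjugate]

lemma vnorm_mulVec_vI_sq_add_vnorm_mulVec_vmI_sq (A : Matrix (Fin 2) (Fin 2) ℂ) :
    vnorm (A *ᵥ vI) ^ 2 + vnorm (A *ᵥ vmI) ^ 2 = 2 * frobSq A := by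
  have hsq (z : ℂ) : ‖z‖ ^ 2 = z.re ^ 2 + z.im ^ 2 := by
    rw [Complex.sq_norm, normSq_apply]; ring
  simp only [vnorm_sq, frobSq, mulVec_fin_two, vI, vmI, Matrix.cons_val_zero,
    Matrix.cons_val_one, hsq, add_re, add_im, mul_re, mul_im, I_re, I_im, neg_re, neg_im,
    one_re, one_im]
  ring

lemma Matrix.SpecialLinearGroup.inv_mulVec_mulVec {n R : Type*} [Fintype n] [DecidableEq n]
    [CommRing R] (M : SpecialLinearGroup n R) (v : n → R) :
    ((M⁻¹ : SpecialLinearGroup n R) : Matrix n n R) *ᵥ ((M : Matrix n n R) *ᵥ v) = v :=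
  inv_smul_smul M v

lemma eq_smul_of_sameDir {u : Fin 2 → ℂ} {c : ℂ} (h : SameDir u ![c, 1]) :
    u = u 1 • ![c, 1] := by
  have h0 : u 0 = u 1 * c := by
    simpa [SameDir, crossDet, sub_eq_zero] using h
  ext i; fin_cases i <;> simp [h0]

lemma exists_inv_mulVec_eq_smul_of_sameDir (B : SL2C) {u : Fin 2 → ℂ} (hu : u ≠ 0) {c : ℂ}
    (h : SameDir ((B : Matrix (Fin 2) (Fin 2) ℂ) *ᵥ u) ![c, 1]) :
    ∃ p : ℂ, ((B⁻¹ : SL2C) : Matrix (Fin 2) (Fin 2) ℂ) *ᵥ ![c, 1] = p • u := by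
  set a := ((B : Matrix (Fin 2) (Fin 2) ℂ) *ᵥ u) 1
  have hBu : (B : Matrix (Fin 2) (Fin 2) ℂ) *ᵥ u = a • ![c, 1] := eq_smul_of_sameDir h
  have ha : a ≠ 0 := by
    rintro ha
    apply hu
    rw [← Matrix.SpecialLinearGroup.inv_mulVec_mulVec B u, hBu, ha, zero_smul, mulVec_zero]
  refine ⟨a⁻¹, ?_⟩
  rw [← Matrix.SpecialLinearGroup.inv_mulVec_mulVec B u, hBu, mulVec_smul, smul_smul,
    inv_mul_cancel₀ ha, one_smul]

lemma sameDir_inv_mulVec_of_mulVec_eq_smul (M : SL2C) {w u : Fin 2 → ℂ} {p : ℂ}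
    (h : (M : Matrix (Fin 2) (Fin 2) ℂ) *ᵥ w = p • u) (hp : p ≠ 0) :
    SameDir (((M⁻¹ : SL2C) : Matrix (Fin 2) (Fin 2) ℂ) *ᵥ u) w := by
  have hu : u = p⁻¹ • ((M : Matrix (Fin 2) (Fin 2) ℂ) *ᵥ w) := by
    rw [h, smul_smul, inv_mul_cancel₀ hp, one_smul]
  rw [SameDir, hu, mulVec_smul, Matrix.SpecialLinearGroup.inv_mulVec_mulVec, ← one_smul ℂ w,
    crossDet_smul, one_smul, crossDet_self, mul_zero]

lemma exists_SL2C_mulVec_vI_vmI {u v : Fin 2 → ℂ} (h : crossDet u v = 2 * I) :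
    ∃ M : SL2C, (M : Matrix (Fin 2) (Fin 2) ℂ) *ᵥ vI = u ∧
      (M : Matrix (Fin 2) (Fin 2) ℂ) *ᵥ vmI = v := by
  -- The columns are the images of `(1, 0) = (vI - vmI) / 2i` and `(0, 1) = (vI + vmI) / 2`.
  let A : Matrix (Fin 2) (Fin 2) ℂ :=
    !![-(u 0 - v 0) * I / 2, (u 0 + v 0) / 2; -(u 1 - v 1) * I / 2, (u 1 + v 1) / 2]
  have hA : A.det = 1 := by
    simp only [crossDet] at h
    rw [det_fin_two_of]
    linear_combination (-I / 2) * h - I_sq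
  refine ⟨⟨A, hA⟩, ?_, ?_⟩ <;> ext i <;> fin_cases i <;>
    simp [A, vI, vmI] <;> ring_nf <;> simp only [I_sq] <;> ring

section

variable {x y : Fin 2 → ℂ}

lemma exists_inv_mulVec_eq_smul_of_mem_Kset (hx : x ≠ 0) (hy : y ≠ 0) {B : SL2C}
    (hB : B ∈ Kset x y) : ∃ p q : ℂ,
      ((B⁻¹ : SL2C) : Matrix (Fin 2) (Fin 2) ℂ) *ᵥ vI = p • x ∧
      ((B⁻¹ : SL2C) : Matrix (Fin 2) (Fin 2) ℂ) *ᵥ vmI = q • y := by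
  obtain ⟨p, hp⟩ := exists_inv_mulVec_eq_smul_of_sameDir B hx hB.1
  obtain ⟨q, hq⟩ := exists_inv_mulVec_eq_smul_of_sameDir B hy hB.2
  exact ⟨p, q, hp, hq⟩

lemma mul_mul_crossDet_eq_of_mulVec_eq_smul (M : SL2C) {p q : ℂ}
    (hp : (M : Matrix (Fin 2) (Fin 2) ℂ) *ᵥ vI = p • x)
    (hq : (M : Matrix (Fin 2) (Fin 2) ℂ) *ᵥ vmI = q • y) : p * q * crossDet x y = 2 * I := by
  rw [← crossDet_smul, ← hp, ← hq, crossDet_mulVec, M.prop, one_mul, crossDet_vI_vmI]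

lemma two_mul_frobSq_eq_of_mulVec_eq_smul (M : Matrix (Fin 2) (Fin 2) ℂ) {p q : ℂ}
    (hp : M *ᵥ vI = p • x) (hq : M *ᵥ vmI = q • y) :
    2 * frobSq M = (‖p‖ * vnorm x) ^ 2 + (‖q‖ * vnorm y) ^ 2 := by
  rw [← vnorm_mulVec_vI_sq_add_vnorm_mulVec_vmI_sq, hp, hq, vnorm_smul, vnorm_smul]

lemma vnorm_mul_vnorm_div_le_opN_sq (hx : x ≠ 0) (hy : y ≠ 0) {B : SL2C} (hB : B ∈ Kset x y) :
    vnorm x * vnorm y / ‖crossDet x y‖ ≤ opN B ^ 2 := by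
  obtain ⟨p, q, hp, hq⟩ := exists_inv_mulVec_eq_smul_of_mem_Kset hx hy hB
  have hpq : ‖p‖ * ‖q‖ * ‖crossDet x y‖ = 2 := by
    simpa using congrArg norm (mul_mul_crossDet_eq_of_mulVec_eq_smul B⁻¹ hp hq)
  have hfrob := two_mul_frobSq_eq_of_mulVec_eq_smul _ hp hq
  rw [frobSq_inv] at hfrob
  have hδ : 0 < ‖crossDet x y‖ := by
    refine (norm_nonneg _).lt_of_ne fun h => ?_
    rw [← h, mul_zero] at hpq
    norm_num at hpq
  have hamgm : 2 * (‖p‖ * vnorm x) * (‖q‖ * vnorm y) ≤ 4 * opN B ^ 2 := by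
    linarith [two_mul_le_add_sq (‖p‖ * vnorm x) (‖q‖ * vnorm y),
      frobSq_le_two_mul_opN_sq (B : Matrix (Fin 2) (Fin 2) ℂ)]
  rw [div_le_iff₀ hδ]
  calc vnorm x * vnorm y
        = 2 * (‖p‖ * vnorm x) * (‖q‖ * vnorm y) * ‖crossDet x y‖ / 4 := by
        linear_combination (-(vnorm x * vnorm y) / 2) * hpq
    _ ≤ 4 * opN B ^ 2 * ‖crossDet x y‖ / 4 := by gcongr
    _ = opN B ^ 2 * ‖crossDet x y‖ := by ring

lemma exists_mem_Kset_opN_sq_le (hx : x ≠ 0) (hy : y ≠ 0) (hΔ : crossDet x y ≠ 0) :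
    ∃ B ∈ Kset x y, opN B ^ 2 ≤ 2 * (vnorm x * vnorm y) / ‖crossDet x y‖ := by
  have hnx := vnorm_pos hx
  have hny := vnorm_pos hy
  have hδ : 0 < ‖crossDet x y‖ := norm_pos_iff.mpr hΔ
  -- Equality in AM-GM: `‖p‖ nx = ‖q‖ ny` with `‖p‖ ‖q‖ δ = 2`.
  set t : ℝ := √(2 * vnorm y / (‖crossDet x y‖ * vnorm x))
  have ht : 0 < t := Real.sqrt_pos.mpr (by positivity)
  have ht2 : t ^ 2 = 2 * vnorm y / (‖crossDet x y‖ * vnorm x) := Real.sq_sqrt (by positivity)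
  set p : ℂ := (t : ℂ)
  set q : ℂ := 2 * I / (p * crossDet x y)
  have hp : p ≠ 0 := by simp [p, ht.ne']
  have hpq : p * q * crossDet x y = 2 * I := by
    simp only [q]; field_simp
  have hq : q ≠ 0 := by
    intro h
    simp [h] at hpq
  obtain ⟨M, hMp, hMq⟩ := exists_SL2C_mulVec_vI_vmI (u := p • x) (v := q • y)
    (by rw [crossDet_smul, hpq])
  refine ⟨M⁻¹, ⟨sameDir_inv_mulVec_of_mulVec_eq_smul M hMp hp,
    sameDir_inv_mulVec_of_mulVec_eq_smul M hMq hq⟩, ?_⟩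
  have hfrob := two_mul_frobSq_eq_of_mulVec_eq_smul _ hMp hMq
  have hnp : ‖p‖ = t := by simp [p, ht.le]
  have hnq : ‖q‖ = 2 / (t * ‖crossDet x y‖) := by simp [q, hnp]
  have hp2 : (‖p‖ * vnorm x) ^ 2 = 2 * (vnorm x * vnorm y) / ‖crossDet x y‖ := by
    rw [hnp, mul_pow, ht2]; field_simp
  have hq2 : (‖q‖ * vnorm y) ^ 2 = 2 * (vnorm x * vnorm y) / ‖crossDet x y‖ := by
    rw [hnq, div_mul_eq_mul_div, div_pow, mul_pow, mul_pow, ht2]; field_simp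
  calc opN ((M⁻¹ : SL2C) : Matrix (Fin 2) (Fin 2) ℂ) ^ 2 ≤ frobSq M := by
        rw [← frobSq_inv]; exact opN_sq_le_frobSq _
    _ = 2 * (vnorm x * vnorm y) / ‖crossDet x y‖ := by linarith

lemma kfun_mem_Icc (hx : x ≠ 0) (hy : y ≠ 0) (hΔ : crossDet x y ≠ 0) :
    kfun x y ∈ Set.Icc (vnorm x * vnorm y / ‖crossDet x y‖)
      (2 * (vnorm x * vnorm y) / ‖crossDet x y‖) := by
  obtain ⟨B₀, hB₀, hB₀le⟩ := exists_mem_Kset_opN_sq_le hx hy hΔ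
  have hB₀mem := Set.mem_image_of_mem (fun B : SL2C => opN B ^ 2) hB₀
  refine ⟨le_csInf ⟨_, hB₀mem⟩ ?_, (csInf_le ⟨0, ?_⟩ hB₀mem).trans hB₀le⟩
  · rintro _ ⟨B, hB, rfl⟩
    exact vnorm_mul_vnorm_div_le_opN_sq hx hy hB
  · rintro _ ⟨B, -, rfl⟩
    positivity

end

/-- 1 ≤ d(x,y)·k(x,y) ≤ 2. -/
theorem stmt1 (x y : Fin 2 → ℂ) (hx : x ≠ 0) (hy : y ≠ 0) (hdist : ¬ SameDir x y) :
    1 ≤ dSin x y * kfun x y ∧ dSin x y * kfun x y ≤ 2 := by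
  have hΔ : crossDet x y ≠ 0 := hdist
  obtain ⟨hlow, hup⟩ := kfun_mem_Icc hx hy hΔ
  have hnx := vnorm_pos hx
  have hny := vnorm_pos hy
  have hδ : 0 < ‖crossDet x y‖ := norm_pos_iff.mpr hΔ
  have hd : 0 < dSin x y := by unfold dSin; positivity
  have hd_mul : dSin x y * (vnorm x * vnorm y / ‖crossDet x y‖) = 1 := by
    unfold dSin; field_simp
  constructor
  · calc 1 = dSin x y * (vnorm x * vnorm y / ‖crossDet x y‖) := hd_mul.symm
      _ ≤ dSin x y * kfun x y := by gcongr
  · calc dSin x y * kfun x y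
          ≤ dSin x y * (2 * (vnorm x * vnorm y) / ‖crossDet x y‖) := by gcongr
      _ = 2 := by rw [mul_div_assoc, mul_left_comm, hd_mul, mul_one]
end

section
/- If x = εi and y = -εi with 0 < ε ≤ 1, then d(x,y) = 2ε/(1+ε²), every minimizing matrix B ∈ K_{x,y} has the form R_λ · D_{ε^{-1/2}} for some λ ∈ ℝ, and k(x,y) = ε⁻¹. -/
open Matrix Complex Filter
set_option maxHeartbeats 1000000
set_option maxRecDepth 8000

noncomputable section AUX

lemma vnorm_eq_norm (v : Fin 2 → ℂ) :
    vnorm v = ‖(WithLp.equiv 2 (Fin 2 → ℂ)).symm v‖ := by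
  rw [EuclideanSpace.norm_eq]
  simp [vnorm, Fin.sum_univ_two]

lemma vnorm_mulVec_le (A : Matrix (Fin 2) (Fin 2) ℂ) (v : Fin 2 → ℂ) :
    vnorm (A.mulVec v) ≤ opN A * vnorm v := by
  have h := (Matrix.toEuclideanCLM (𝕜 := ℂ) (n := Fin 2) A).le_opNorm
    ((WithLp.equiv 2 (Fin 2 → ℂ)).symm v)
  change ‖(WithLp.equiv 2 (Fin 2 → ℂ)).symm (A.mulVec v)‖ ≤ ‖Matrix.toEuclideanCLM (𝕜 := ℂ) (n := Fin 2) A‖ * ‖(WithLp.equiv 2 (Fin 2 → ℂ)).symm v‖ at h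
  rwa [vnorm_eq_norm, vnorm_eq_norm]

lemma opN_le_bound (A : Matrix (Fin 2) (Fin 2) ℂ) (C : ℝ) (hC : 0 ≤ C)
    (h : ∀ v, vnorm (A.mulVec v) ≤ C * vnorm v) : opN A ≤ C := by
  apply ContinuousLinearMap.opNorm_le_bound _ hC
  intro x
  have := h (WithLp.equiv 2 (Fin 2 → ℂ) x)
  rw [vnorm_eq_norm, vnorm_eq_norm] at this
  exact this

lemma Kset_structure (ε : ℝ) (B : SL2C)
    (hB : B ∈ Kset ![(ε : ℂ) * Complex.I, 1] ![-((ε : ℂ) * Complex.I), 1]) :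
    (B : Matrix (Fin 2) (Fin 2) ℂ) 0 1 = -((B : Matrix (Fin 2) (Fin 2) ℂ) 1 0 * ε) ∧
    (B : Matrix (Fin 2) (Fin 2) ℂ) 1 1 = (B : Matrix (Fin 2) (Fin 2) ℂ) 0 0 * ε ∧
    (ε : ℂ) * (((B : Matrix (Fin 2) (Fin 2) ℂ) 0 0) ^ 2
      + ((B : Matrix (Fin 2) (Fin 2) ℂ) 1 0) ^ 2) = 1 := by
  obtain ⟨h1, h2⟩ := hB
  set a := (B : Matrix (Fin 2) (Fin 2) ℂ) 0 0
  set b := (B : Matrix (Fin 2) (Fin 2) ℂ) 0 1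
  set c := (B : Matrix (Fin 2) (Fin 2) ℂ) 1 0
  set d := (B : Matrix (Fin 2) (Fin 2) ℂ) 1 1
  have hdet : a * d - b * c = 1 := by
    have := B.prop
    rwa [Matrix.det_fin_two] at this
  simp only [SameDir, crossDet, vI, vmI, Matrix.mulVec, dotProduct,
    Fin.sum_univ_two, Matrix.cons_val_zero, Matrix.cons_val_one, Matrix.head_cons] at h1 h2
  have hI := Complex.I_sq
  have hb : b = -(c * ε) := by linear_combination (h1 + h2) / 2 + c * (ε:ℂ) * hI
  have hd : d = a * ε := by
    linear_combination (h1 - h2) * (Complex.I / 2) + (d - a * (ε:ℂ)) * hI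
  refine ⟨hb, hd, ?_⟩
  rw [hb, hd] at hdet; linear_combination hdet

/-- real/imag decomposition of the determinant constraint -/
lemma det_re_im (ε : ℝ) (a c : ℂ) (h : (ε : ℂ) * (a ^ 2 + c ^ 2) = 1) :
    ε * (a.re ^ 2 - a.im ^ 2 + c.re ^ 2 - c.im ^ 2) = 1 := by
  have h' := congrArg Complex.re h
  simp only [Complex.mul_re, Complex.add_re, Complex.add_im, Complex.ofReal_re,
    Complex.ofReal_im, Complex.one_re, pow_two, Complex.mul_im] at h'
  linear_combination h'

lemma norm_sq_complex (a : ℂ) : ‖a‖ ^ 2 = a.re ^ 2 + a.im ^ 2 := by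
  rw [Complex.sq_norm, Complex.normSq_apply] ; ring

end AUX

/-- explicit computation for x = εi, y = -εi. -/
theorem stmt4 (ε : ℝ) (hε0 : 0 < ε) (hε1 : ε ≤ 1) :
    dSin ![(ε : ℂ) * Complex.I, 1] ![-((ε : ℂ) * Complex.I), 1] = 2 * ε / (1 + ε ^ 2) ∧
    (∀ B ∈ Kset ![(ε : ℂ) * Complex.I, 1] ![-((ε : ℂ) * Complex.I), 1],
      opN (B : Matrix (Fin 2) (Fin 2) ℂ) ^ 2
          = kfun ![(ε : ℂ) * Complex.I, 1] ![-((ε : ℂ) * Complex.I), 1] →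
      ∃ l : ℝ, (B : Matrix (Fin 2) (Fin 2) ℂ)
          = Rmat (l : ℂ) * Dmat ((Real.sqrt ε : ℂ))⁻¹) ∧
    kfun ![(ε : ℂ) * Complex.I, 1] ![-((ε : ℂ) * Complex.I), 1] = ε⁻¹ := by
  have hse : Real.sqrt ε > 0 := Real.sqrt_pos.mpr hε0
  have hs2 : Real.sqrt ε ^ 2 = ε := Real.sq_sqrt hε0.le
  have hsC : ((Real.sqrt ε : ℂ)) ^ 2 = (ε : ℂ) := by
    exact_mod_cast congrArg Complex.ofReal hs2
  have hsne : ((Real.sqrt ε : ℂ)) ≠ 0 := by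
    simpa using Complex.ofReal_ne_zero.mpr (ne_of_gt hse)
  -- Part 1 : dSin
  have part1 : dSin ![(ε : ℂ) * Complex.I, 1] ![-((ε : ℂ) * Complex.I), 1]
      = 2 * ε / (1 + ε ^ 2) := by
    have hcd : crossDet ![(ε : ℂ) * Complex.I, 1] ![-((ε : ℂ) * Complex.I), 1]
        = ((2 * ε : ℝ) : ℂ) * Complex.I := by
      simp only [crossDet, Matrix.cons_val_zero, Matrix.cons_val_one, Matrix.head_cons]
      push_cast; ring
    have hnI : ‖(ε : ℂ) * Complex.I‖ = ε := by
      simp [abs_of_pos hε0]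
    have hv : vnorm ![(ε : ℂ) * Complex.I, 1] = Real.sqrt (ε ^ 2 + 1) := by
      simp [vnorm, hnI]
    have hv' : vnorm ![-((ε : ℂ) * Complex.I), 1] = Real.sqrt (ε ^ 2 + 1) := by
      simp [vnorm, hnI]
    rw [dSin, hcd, hv, hv']
    rw [Real.mul_self_sqrt (by positivity)]
    have hn2 : ‖((2 * ε : ℝ) : ℂ) * Complex.I‖ = 2 * ε := by
      rw [norm_mul, Complex.norm_I, Complex.norm_real, mul_one,
        Real.norm_eq_abs, abs_of_pos (by positivity)]
    rw [hn2]; ring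
  -- the minimizing diagonal matrix
  set μ : ℂ := ((Real.sqrt ε : ℂ))⁻¹ with hμ
  have hμne : μ ≠ 0 := inv_ne_zero hsne
  have hdetD : Matrix.det !![μ, 0; 0, μ⁻¹] = 1 := by
    rw [Matrix.det_fin_two_of, mul_inv_cancel₀ hμne]; ring
  set B₀ : SL2C := ⟨!![μ, 0; 0, μ⁻¹], hdetD⟩ with hB₀
  have hkey : μ * ((ε:ℂ) * Complex.I) - μ⁻¹ * Complex.I = 0 := by
    rw [hμ, inv_inv]
    field_simp
    linear_combination -Complex.I * hsC
  have hB₀mem : B₀ ∈ Kset ![(ε : ℂ) * Complex.I, 1] ![-((ε : ℂ) * Complex.I), 1] := by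
    constructor <;>
    · simp only [SameDir, crossDet, vI, vmI, hB₀, Matrix.SpecialLinearGroup.coe_mk,
        Matrix.mulVec, dotProduct, Fin.sum_univ_two, Matrix.cons_val_zero,
        Matrix.cons_val_one, Matrix.head_cons, Matrix.cons_val', Matrix.head_fin_const,
        Matrix.empty_val', Matrix.cons_val_fin_one, Matrix.of_apply]
      first
        | linear_combination hkey
        | linear_combination -hkey
  -- norm of μ
  have hnμ : ‖μ‖ = (Real.sqrt ε)⁻¹ := by
    rw [hμ, norm_inv]
    simp [abs_of_pos hse]
  have hnμ' : ‖μ⁻¹‖ = Real.sqrt ε := by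
    rw [hμ, inv_inv]
    simp [abs_of_pos hse]
  have hr1 : (1:ℝ) ≤ (Real.sqrt ε)⁻¹ := by
    have h1 : Real.sqrt ε ≤ 1 := Real.sqrt_le_one.mpr hε1
    have h2 : (Real.sqrt ε)⁻¹ * Real.sqrt ε = 1 := inv_mul_cancel₀ (ne_of_gt hse)
    have h3 : (0:ℝ) < (Real.sqrt ε)⁻¹ := by positivity
    nlinarith
  -- opN B₀ = (√ε)⁻¹
  have hub : opN (B₀ : Matrix (Fin 2) (Fin 2) ℂ) ≤ (Real.sqrt ε)⁻¹ := by
    apply opN_le_bound _ _ (by positivity)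
    intro v
    have hmv : (B₀ : Matrix (Fin 2) (Fin 2) ℂ).mulVec v = ![μ * v 0, μ⁻¹ * v 1] := by
      funext i
      fin_cases i <;>
        simp [hB₀, Matrix.mulVec, dotProduct, Fin.sum_univ_two]
    rw [hmv, vnorm, vnorm]
    simp only [Matrix.cons_val_zero, Matrix.cons_val_one, Matrix.head_cons, norm_mul,
      hnμ, hnμ']
    have h1 : Real.sqrt ε ^ 2 ≤ ((Real.sqrt ε)⁻¹) ^ 2 := by
      apply pow_le_pow_left₀ hse.le _ 2
      calc Real.sqrt ε ≤ 1 := Real.sqrt_le_one.mpr hε1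
      _ ≤ (Real.sqrt ε)⁻¹ := hr1
    have hkey2 : ((Real.sqrt ε)⁻¹ * ‖v 0‖) ^ 2 + (Real.sqrt ε * ‖v 1‖) ^ 2
        ≤ ((Real.sqrt ε)⁻¹) ^ 2 * (‖v 0‖ ^ 2 + ‖v 1‖ ^ 2) := by
      nlinarith [sq_nonneg (‖v 0‖), sq_nonneg (‖v 1‖)]
    calc Real.sqrt (((Real.sqrt ε)⁻¹ * ‖v 0‖) ^ 2 + (Real.sqrt ε * ‖v 1‖) ^ 2)
        ≤ Real.sqrt (((Real.sqrt ε)⁻¹) ^ 2 * (‖v 0‖ ^ 2 + ‖v 1‖ ^ 2)) :=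
          Real.sqrt_le_sqrt hkey2
      _ = (Real.sqrt ε)⁻¹ * Real.sqrt (‖v 0‖ ^ 2 + ‖v 1‖ ^ 2) := by
          rw [Real.sqrt_mul (sq_nonneg _), Real.sqrt_sq (by positivity)]
  have hlbB₀ : (Real.sqrt ε)⁻¹ ≤ opN (B₀ : Matrix (Fin 2) (Fin 2) ℂ) := by
    have h := vnorm_mulVec_le (B₀ : Matrix (Fin 2) (Fin 2) ℂ) ![1, 0]
    have hmv : (B₀ : Matrix (Fin 2) (Fin 2) ℂ).mulVec ![1, 0] = ![μ, 0] := by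
      funext i
      fin_cases i <;>
        simp [hB₀, Matrix.mulVec, dotProduct, Fin.sum_univ_two]
    rw [hmv] at h
    have hv1 : vnorm ![(1:ℂ), 0] = 1 := by simp [vnorm]
    have hv2 : vnorm ![μ, 0] = (Real.sqrt ε)⁻¹ := by
      rw [vnorm]
      simp only [Matrix.cons_val_zero, Matrix.cons_val_one, Matrix.head_cons, hnμ,
        norm_zero]
      rw [show ((Real.sqrt ε)⁻¹) ^ 2 + (0:ℝ) ^ 2 = ((Real.sqrt ε)⁻¹) ^ 2 by ring,
        Real.sqrt_sq (by positivity)]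
    rw [hv1, hv2, mul_one] at h
    exact h
  have hopB₀ : opN (B₀ : Matrix (Fin 2) (Fin 2) ℂ) ^ 2 = ε⁻¹ := by
    have : opN (B₀ : Matrix (Fin 2) (Fin 2) ℂ) = (Real.sqrt ε)⁻¹ := le_antisymm hub hlbB₀
    rw [this, inv_pow, hs2]
  -- lower bound for any member
  have hlow : ∀ B ∈ Kset ![(ε : ℂ) * Complex.I, 1] ![-((ε : ℂ) * Complex.I), 1],
      ε⁻¹ + 2 * (((B : Matrix (Fin 2) (Fin 2) ℂ) 0 0).im ^ 2
        + ((B : Matrix (Fin 2) (Fin 2) ℂ) 1 0).im ^ 2)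
      ≤ opN (B : Matrix (Fin 2) (Fin 2) ℂ) ^ 2 := by
    intro B hB
    obtain ⟨hb, hd, hdet⟩ := Kset_structure ε B hB
    set a := (B : Matrix (Fin 2) (Fin 2) ℂ) 0 0
    set c := (B : Matrix (Fin 2) (Fin 2) ℂ) 1 0
    have hre := det_re_im ε a c hdet
    have hmv : (B : Matrix (Fin 2) (Fin 2) ℂ).mulVec ![1, 0] = ![a, c] := by
      funext i
      fin_cases i <;>
        simp [Matrix.mulVec, dotProduct, Fin.sum_univ_two, a, c]
    have h := vnorm_mulVec_le (B : Matrix (Fin 2) (Fin 2) ℂ) ![1, 0]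
    rw [hmv] at h
    have hv1 : vnorm ![(1:ℂ), 0] = 1 := by simp [vnorm]
    rw [hv1, mul_one] at h
    have hvs : vnorm ![a, c] ^ 2 = ‖a‖ ^ 2 + ‖c‖ ^ 2 := by
      rw [vnorm]
      simp only [Matrix.cons_val_zero, Matrix.cons_val_one, Matrix.head_cons]
      rw [Real.sq_sqrt (by positivity)]
    have h2 : vnorm ![a, c] ^ 2 ≤ opN (B : Matrix (Fin 2) (Fin 2) ℂ) ^ 2 := by
      apply pow_le_pow_left₀ _ h 2
      rw [vnorm]; positivity
    rw [hvs] at h2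
    rw [norm_sq_complex, norm_sq_complex] at h2
    have hεinv : ε⁻¹ = a.re ^ 2 - a.im ^ 2 + c.re ^ 2 - c.im ^ 2 := by
      field_simp at hre ⊢
      linarith [hre]
    nlinarith [h2]
  -- kfun value
  have part3 : kfun ![(ε : ℂ) * Complex.I, 1] ![-((ε : ℂ) * Complex.I), 1] = ε⁻¹ := by
    rw [kfun]
    have hmem : ε⁻¹ ∈ ((fun B : SL2C => opN (B : Matrix (Fin 2) (Fin 2) ℂ) ^ 2) ''
        Kset ![(ε : ℂ) * Complex.I, 1] ![-((ε : ℂ) * Complex.I), 1]) :=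
      ⟨B₀, hB₀mem, hopB₀⟩
    have hlb : ∀ z ∈ ((fun B : SL2C => opN (B : Matrix (Fin 2) (Fin 2) ℂ) ^ 2) ''
        Kset ![(ε : ℂ) * Complex.I, 1] ![-((ε : ℂ) * Complex.I), 1]), ε⁻¹ ≤ z := by
      rintro z ⟨B, hB, rfl⟩
      have := hlow B hB
      nlinarith [sq_nonneg (((B : Matrix (Fin 2) (Fin 2) ℂ) 0 0).im),
        sq_nonneg (((B : Matrix (Fin 2) (Fin 2) ℂ) 1 0).im)]
    exact le_antisymm (csInf_le ⟨ε⁻¹, hlb⟩ hmem) (le_csInf ⟨ε⁻¹, hmem⟩ hlb)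
  -- Part 2 : characterization of minimizers
  have part2 : ∀ B ∈ Kset ![(ε : ℂ) * Complex.I, 1] ![-((ε : ℂ) * Complex.I), 1],
      opN (B : Matrix (Fin 2) (Fin 2) ℂ) ^ 2
          = kfun ![(ε : ℂ) * Complex.I, 1] ![-((ε : ℂ) * Complex.I), 1] →
      ∃ l : ℝ, (B : Matrix (Fin 2) (Fin 2) ℂ)
          = Rmat (l : ℂ) * Dmat ((Real.sqrt ε : ℂ))⁻¹ := by
    intro B hB hmin
    rw [part3] at hmin
    obtain ⟨hb, hd, hdet⟩ := Kset_structure ε B hB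
    set a := (B : Matrix (Fin 2) (Fin 2) ℂ) 0 0 with ha
    set c := (B : Matrix (Fin 2) (Fin 2) ℂ) 1 0 with hc
    have hre := det_re_im ε a c hdet
    have hlo := hlow B hB
    rw [hmin, ← ha, ← hc] at hlo
    have haim : a.im = 0 ∧ c.im = 0 := by
      constructor <;> nlinarith [sq_nonneg a.im, sq_nonneg c.im]
    -- now a, c real with a.re^2 + c.re^2 = ε⁻¹
    have hre2 : a.re ^ 2 + c.re ^ 2 = ε⁻¹ := by
      rw [haim.1, haim.2] at hre
      field_simp at hre ⊢
      linarith
    set u : ℝ := a.re * Real.sqrt ε with hu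
    set w : ℝ := c.re * Real.sqrt ε with hw
    have huw : u ^ 2 + w ^ 2 = 1 := by
      rw [hu, hw]
      have : a.re ^ 2 * ε + c.re ^ 2 * ε = 1 := by
        field_simp at hre2
        nlinarith [hre2]
      nlinarith [hs2]
    have hu1 : -1 ≤ u ∧ u ≤ 1 := by
      constructor <;> nlinarith [sq_nonneg w]
    -- find θ
    obtain ⟨θ, hcos, hsin⟩ : ∃ θ : ℝ, Real.cos θ = u ∧ Real.sin θ = w := by
      by_cases hw0 : 0 ≤ w
      · refine ⟨Real.arccos u, Real.cos_arccos hu1.1 hu1.2, ?_⟩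
        rw [Real.sin_arccos]
        rw [show (1:ℝ) - u ^ 2 = w ^ 2 by linarith]
        exact Real.sqrt_sq hw0
      · refine ⟨-Real.arccos u, by rw [Real.cos_neg]; exact Real.cos_arccos hu1.1 hu1.2, ?_⟩
        rw [Real.sin_neg, Real.sin_arccos]
        rw [show (1:ℝ) - u ^ 2 = w ^ 2 by linarith]
        rw [Real.sqrt_sq_eq_abs, abs_of_neg (lt_of_not_ge hw0)]
        ring
    refine ⟨θ / (2 * Real.pi), ?_⟩
    have hπ : (2 * Real.pi) ≠ 0 := by positivity
    have hπC : (Real.pi : ℂ) ≠ 0 := Complex.ofReal_ne_zero.mpr Real.pi_ne_zero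
    have hangle : (2 * (Real.pi:ℂ) * ((θ / (2 * Real.pi) : ℝ) : ℂ)) = (θ : ℂ) := by
      push_cast
      field_simp
    have hcosC : Complex.cos (2 * (Real.pi:ℂ) * ((θ / (2 * Real.pi) : ℝ) : ℂ)) = (u : ℂ) := by
      rw [hangle, ← Complex.ofReal_cos, hcos]
    have hsinC : Complex.sin (2 * (Real.pi:ℂ) * ((θ / (2 * Real.pi) : ℝ) : ℂ)) = (w : ℂ) := by
      rw [hangle, ← Complex.ofReal_sin, hsin]
    have hA : a = (a.re : ℂ) := by
      apply Complex.ext <;> simp [haim.1]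
    have hC : c = (c.re : ℂ) := by
      apply Complex.ext <;> simp [haim.2]
    have huC : (u : ℂ) = (a.re : ℂ) * (Real.sqrt ε : ℂ) := by push_cast [hu]; ring
    have hwC : (w : ℂ) = (c.re : ℂ) * (Real.sqrt ε : ℂ) := by push_cast [hw]; ring
    have hBlit : (B : Matrix (Fin 2) (Fin 2) ℂ)
        = !![(a.re : ℂ), -((c.re : ℂ) * (ε:ℂ)); (c.re : ℂ), (a.re : ℂ) * (ε:ℂ)] := by
      rw [Matrix.eta_fin_two (B : Matrix (Fin 2) (Fin 2) ℂ)]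
      rw [hb, hd, ← ha, ← hc, hA, hC]
      simp
    rw [hBlit]
    ext i j
    fin_cases i <;> fin_cases j <;>
      simp only [Rmat, Dmat, hcosC, hsinC, Matrix.mul_apply, Fin.sum_univ_two,
        Matrix.cons_val_zero, Matrix.cons_val_one, Matrix.head_cons, Matrix.cons_val',
        Matrix.empty_val', Matrix.cons_val_fin_one, Matrix.head_fin_const,
        Matrix.of_apply, inv_inv, Fin.isValue, Fin.zero_eta, Fin.mk_one]
    · -- 0 0 : ↑a.re = u * (√ε)⁻¹ + ...
      rw [huC]
      field_simp
      ring
    · -- 0 1 : -(c.re ε) = ... -w * √ε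
      first
        | linear_combination (Real.sqrt ε : ℂ) * hwC + (c.re : ℂ) * hsC
        | linear_combination (-(Real.sqrt ε : ℂ)) * hwC - (c.re : ℂ) * hsC
        | (rw [hwC]; field_simp; linear_combination (c.re : ℂ) * hsC)
        | (rw [hwC]; field_simp; linear_combination (-(c.re : ℂ)) * hsC)
    · -- 1 0 : ↑c.re = w * (√ε)⁻¹ + ...
      rw [hwC]
      field_simp
      ring
    · -- 1 1 : a.re ε = u √ε
      first
        | linear_combination (Real.sqrt ε : ℂ) * huC + (a.re : ℂ) * hsC
        | linear_combination (-(Real.sqrt ε : ℂ)) * huC - (a.re : ℂ) * hsC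
        | (rw [huC]; field_simp; linear_combination (a.re : ℂ) * hsC)
        | (rw [huC]; field_simp; linear_combination (-(a.re : ℂ)) * hsC)
  exact ⟨part1, part2, part3⟩
end
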